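/- Consider the greedy multiscale method: let f* : [ℓ,u] → ℝ be L-Lipschitz, let S ≥ 1, and for each scale s = 1,…,S let x*_s ∈ ℝ^{I_s}, with I_s = 2^{S−s+1} + 1, be the exact samples of f* on the uniform grid with I_s points. Suppose vectors x_s^0, x_s^{K_s} ∈ ℝ^{I_s} satisfy: (i) iterate convergence at each scale, ‖x_s^{K_s} − x*_s‖₂ ≤ q^{K_s}·‖x_s^0 − x*_s‖₂ with rate q ∈ [0,1); and (ii) warm starting, x_s^0 = midpoint linear interpolation of x_{s+1}^{K_{s+1}} for s = 1,…,S−1. Then the finest-scale iterate satisfies ‖x_1^{K_1} − x*_1‖₂ ≤ √(2^{S−1})·q^{r_S}·‖x_S^0 − x*_S‖₂ + L·(u−ℓ)/(2·√(2^{S+1}))·Σ_{s=1}^{S−1} 2^s·q^{r_s}, where r_s = Σ_{t=1}^{s} K_t. -/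

import Mathlib

open Finset

/-- Uniform grid with `I` points on `[l, u]` (0-indexed): `t[i] = l + i·(u−l)/(I−1)`. -/
noncomputable def unifGrid (l u : ℝ) (I : ℕ) (i : ℕ) : ℝ := l + i * (u - l) / ((I : ℝ) - 1)

/-- Midpoint linear interpolation (0-indexed): even entries copy `x`, odd entries are midpoints. -/
noncomputable def midInterp (x : ℕ → ℝ) (j : ℕ) : ℝ :=
  if j % 2 = 0 then x (j / 2) else (x (j / 2) + x (j / 2 + 1)) / 2

/-- Euclidean norm of the first `n` entries. -/
noncomputable def vnorm (n : ℕ) (x : ℕ → ℝ) : ℝ := Real.sqrt (∑ i ∈ range n, x i ^ 2)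

/-!
Write `e_s` for the error at scale `s`. Interpolation at most doubles the squared norm of the
coarse error, and interpolating the exact coarse samples differs from the exact fine samples only
at the `n = 2^(S-s)` new midpoints, each by at most `L (u - l) / (2 n)`. Hence
`e_s ≤ q^(K_s) (√2 e_(s+1) + L (u - l) / (2 √n))`, and unrolling this recursion from the
coarsest scale gives the bound.
-/

lemma Real.sqrt_pow_eq_pow_sqrt {x : ℝ} (hx : 0 ≤ x) (n : ℕ) : √(x ^ n) = √x ^ n := by
  rw [← Real.sq_sqrt hx, ← pow_mul, mul_comm, pow_mul, Real.sqrt_sq (by positivity),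
    Real.sqrt_sq (Real.sqrt_nonneg x)]

lemma abs_avg_sub_midpoint_le {s : Set ℝ} (hs : s.OrdConnected) {f : ℝ → ℝ} {L : ℝ}
    (hf : ∀ a ∈ s, ∀ b ∈ s, |f a - f b| ≤ L * |a - b|) {a b : ℝ} (ha : a ∈ s) (hb : b ∈ s)
    (hab : a ≤ b) : |(f a + f b) / 2 - f ((a + b) / 2)| ≤ L * (b - a) / 2 := by
  have hm : (a + b) / 2 ∈ s := hs.out ha hb ⟨by linarith, by linarith⟩
  have hfa := hf a ha _ hm
  have hfb := hf b hb _ hm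
  have hd : |(b - a) / 2| = (b - a) / 2 := abs_of_nonneg (by linarith)
  rw [show a - (a + b) / 2 = -((b - a) / 2) by ring, abs_neg, hd] at hfa
  rw [show b - (a + b) / 2 = (b - a) / 2 by ring, hd] at hfb
  rw [abs_le] at hfa hfb ⊢
  constructor <;> linarith [hfa.1, hfa.2, hfb.1, hfb.2]

lemma vnorm_eq_norm (n : ℕ) (x : ℕ → ℝ) :
    vnorm n x = ‖(WithLp.toLp 2 (fun i : Fin n => x i) : EuclideanSpace ℝ (Fin n))‖ := by
  rw [EuclideanSpace.norm_eq, vnorm]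
  simp [Fin.sum_univ_eq_sum_range (fun i => x i ^ 2)]

lemma vnorm_congr {n : ℕ} {x y : ℕ → ℝ} (h : ∀ i < n, x i = y i) : vnorm n x = vnorm n y := by
  unfold vnorm
  rw [sum_congr rfl fun i hi => by rw [h i (mem_range.mp hi)]]

lemma vnorm_add_le (n : ℕ) (x y : ℕ → ℝ) : vnorm n (x + y) ≤ vnorm n x + vnorm n y := by
  simp only [vnorm_eq_norm]
  exact norm_add_le (WithLp.toLp 2 fun i : Fin n => x i) (WithLp.toLp 2 fun i : Fin n => y i)

lemma midInterp_two_mul (x : ℕ → ℝ) (i : ℕ) : midInterp x (2 * i) = x i := by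
  simp [midInterp]

lemma midInterp_two_mul_add_one (x : ℕ → ℝ) (i : ℕ) :
    midInterp x (2 * i + 1) = (x i + x (i + 1)) / 2 := by
  simp [midInterp, Nat.add_mod, show (2 * i + 1) / 2 = i by omega]

lemma midInterp_sub (x y : ℕ → ℝ) : midInterp (x - y) = midInterp x - midInterp y := by
  ext j
  simp only [midInterp, Pi.sub_apply]
  split <;> ring

/-- Each squared midpoint is at most the mean of its neighbours' squares, and interior nodes are
neighbours twice; the boundary terms keep the induction going. -/
lemma sum_sq_midInterp_add_le (x : ℕ → ℝ) (n : ℕ) :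
    ∑ j ∈ range (2 * n + 1), midInterp x j ^ 2 + (x 0 ^ 2 + x n ^ 2) / 2 ≤
      2 * ∑ i ∈ range (n + 1), x i ^ 2 := by
  induction n with
  | zero => simp [midInterp]; linarith
  | succ n ih =>
    rw [show 2 * (n + 1) + 1 = 2 * n + 1 + 1 + 1 by ring, sum_range_succ, sum_range_succ,
      sum_range_succ _ (n + 1), midInterp_two_mul_add_one,
      show 2 * n + 1 + 1 = 2 * (n + 1) by ring, midInterp_two_mul]
    nlinarith [sq_nonneg (x n - x (n + 1))]

lemma vnorm_midInterp_le (x : ℕ → ℝ) (n : ℕ) :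
    vnorm (2 * n + 1) (midInterp x) ≤ √2 * vnorm (n + 1) x := by
  rw [vnorm, vnorm, ← Real.sqrt_mul zero_le_two]
  apply Real.sqrt_le_sqrt
  nlinarith [sum_sq_midInterp_add_le x n, sq_nonneg (x 0), sq_nonneg (x n)]

lemma vnorm_le_of_odd_support {n : ℕ} {g : ℕ → ℝ} {c : ℝ} (hc : 0 ≤ c)
    (heven : ∀ i ≤ n, g (2 * i) = 0) (hodd : ∀ i < n, |g (2 * i + 1)| ≤ c) :
    vnorm (2 * n + 1) g ≤ √n * c := by
  suffices hsum : ∑ j ∈ range (2 * n + 1), g j ^ 2 ≤ n * c ^ 2 by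
    rw [vnorm, ← Real.sqrt_sq hc, ← Real.sqrt_mul n.cast_nonneg]
    exact Real.sqrt_le_sqrt hsum
  induction n with
  | zero => simp [heven 0 le_rfl]
  | succ n ih =>
    rw [show 2 * (n + 1) + 1 = 2 * n + 1 + 1 + 1 by ring, sum_range_succ, sum_range_succ,
      show 2 * n + 1 + 1 = 2 * (n + 1) by ring, heven (n + 1) le_rfl]
    have hlast : g (2 * n + 1) ^ 2 ≤ c ^ 2 :=
      sq_le_sq.mpr ((hodd n n.lt_succ_self).trans (le_abs_self c))
    have := ih (fun i hi => heven i (by omega)) (fun i hi => hodd i (by omega))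
    push_cast
    nlinarith

section UnifGrid

variable (l u : ℝ)

lemma unifGrid_succ (n i : ℕ) : unifGrid l u (n + 1) i = l + i * (u - l) / n := by
  simp [unifGrid]

lemma unifGrid_two_mul {n : ℕ} (hn : n ≠ 0) (i : ℕ) :
    unifGrid l u (2 * n + 1) (2 * i) = unifGrid l u (n + 1) i := by
  have : (n : ℝ) ≠ 0 := by exact_mod_cast hn
  rw [unifGrid_succ, unifGrid_succ]
  push_cast
  field_simp

lemma unifGrid_two_mul_add_one {n : ℕ} (hn : n ≠ 0) (i : ℕ) :
    unifGrid l u (2 * n + 1) (2 * i + 1) =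
      (unifGrid l u (n + 1) i + unifGrid l u (n + 1) (i + 1)) / 2 := by
  have : (n : ℝ) ≠ 0 := by exact_mod_cast hn
  rw [unifGrid_succ, unifGrid_succ, unifGrid_succ]
  push_cast
  field_simp
  ring

lemma unifGrid_succ_sub (n i : ℕ) :
    unifGrid l u (n + 1) (i + 1) - unifGrid l u (n + 1) i = (u - l) / n := by
  rw [unifGrid_succ, unifGrid_succ]
  push_cast
  ring

variable {l u}

lemma unifGrid_mem_Icc (hlu : l ≤ u) {n i : ℕ} (hi : i ≤ n) :
    unifGrid l u (n + 1) i ∈ Set.Icc l u := by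
  have hi1 : (i : ℝ) / n ≤ 1 := div_le_one_of_le₀ (by exact_mod_cast hi) n.cast_nonneg
  have hi0 : 0 ≤ (i : ℝ) / n := by positivity
  rw [unifGrid_succ, mul_comm, mul_div_assoc]
  constructor <;> nlinarith

end UnifGrid

section WarmStart

variable {l u L : ℝ} {f : ℝ → ℝ}

lemma vnorm_midInterp_samples_sub_le (hlu : l < u)
    (hf : ∀ a ∈ Set.Icc l u, ∀ b ∈ Set.Icc l u, |f a - f b| ≤ L * |a - b|) {n : ℕ} (hn : n ≠ 0) :
    vnorm (2 * n + 1) (midInterp (fun i => f (unifGrid l u (n + 1) i)) -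
      fun j => f (unifGrid l u (2 * n + 1) j)) ≤ L * (u - l) / (2 * √n) := by
  have hL : 0 ≤ L := by
    have h := (abs_nonneg _).trans (hf u ⟨hlu.le, le_rfl⟩ l ⟨le_rfl, hlu.le⟩)
    exact nonneg_of_mul_nonneg_left h (abs_pos.mpr (sub_ne_zero.mpr hlu.ne'))
  have hn' : (0 : ℝ) < n := by positivity
  have hbound := vnorm_le_of_odd_support (c := L * (u - l) / (2 * n))
    (g := midInterp (fun i => f (unifGrid l u (n + 1) i)) -
      fun j => f (unifGrid l u (2 * n + 1) j))
    (by have := hlu.le; positivity)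
    (fun i _ => by simp [midInterp_two_mul, unifGrid_two_mul l u hn])
    (fun i hi => by
      have hmem : ∀ k ≤ n, unifGrid l u (n + 1) k ∈ Set.Icc l u :=
        fun k hk => unifGrid_mem_Icc hlu.le hk
      have hstep := unifGrid_succ_sub l u n i
      have := abs_avg_sub_midpoint_le Set.ordConnected_Icc hf (hmem i hi.le) (hmem (i + 1) hi)
        (by rw [← sub_nonneg, hstep]; have := hlu.le; positivity)
      rw [Pi.sub_apply, midInterp_two_mul_add_one, unifGrid_two_mul_add_one l u hn]
      rwa [hstep, mul_div_assoc', div_div, mul_comm (n : ℝ)] at this)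
  calc _ ≤ √n * (L * (u - l) / (2 * n)) := hbound
    _ = L * (u - l) / (2 * √n) := by
        field_simp
        rw [Real.sq_sqrt hn'.le]
        ring

lemma vnorm_warmStart_sub_le (hlu : l < u)
    (hf : ∀ a ∈ Set.Icc l u, ∀ b ∈ Set.Icc l u, |f a - f b| ≤ L * |a - b|) {n : ℕ} (hn : n ≠ 0)
    {x₀ x y xc : ℕ → ℝ} (hx₀ : ∀ j < 2 * n + 1, x₀ j = midInterp y j)
    (hx : ∀ j < 2 * n + 1, x j = f (unifGrid l u (2 * n + 1) j))
    (hxc : ∀ i < n + 1, xc i = f (unifGrid l u (n + 1) i)) :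
    vnorm (2 * n + 1) (x₀ - x) ≤ √2 * vnorm (n + 1) (y - xc) + L * (u - l) / (2 * √n) := by
  set fc : ℕ → ℝ := fun i => f (unifGrid l u (n + 1) i)
  calc vnorm (2 * n + 1) (x₀ - x)
      = vnorm (2 * n + 1) (midInterp (y - fc) +
          (midInterp fc - fun j => f (unifGrid l u (2 * n + 1) j))) :=
        vnorm_congr fun j hj => by simp [hx₀ j hj, hx j hj, midInterp_sub]
    _ ≤ _ := vnorm_add_le _ _ _
    _ ≤ √2 * vnorm (n + 1) (y - fc) + L * (u - l) / (2 * √n) :=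
        add_le_add (vnorm_midInterp_le _ n) (vnorm_midInterp_samples_sub_le hlu hf hn)
    _ = _ := by rw [vnorm_congr (x := y - fc) (y := y - xc) fun i hi => by simp [fc, hxc i hi]]

end WarmStart

lemma le_of_backward_recursion {a ρ γ : ℕ → ℝ} {c E : ℝ} {s S : ℕ} (hc : 0 ≤ c)
    (hρ : ∀ t, 0 ≤ ρ t) (hlast : a S ≤ ρ S * E)
    (hrec : ∀ t ∈ Ico s S, a t ≤ ρ t * (c * a (t + 1) + γ t)) (hs : s ≤ S) :
    a s ≤ c ^ (S - s) * (∏ t ∈ Icc s S, ρ t) * E +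
      ∑ j ∈ Ico s S, c ^ (j - s) * (∏ t ∈ Icc s j, ρ t) * γ j := by
  have prod_Icc_peel : ∀ t j, t ≤ j → ∏ i ∈ Icc t j, ρ i = ρ t * ∏ i ∈ Icc (t + 1) j, ρ i :=
    fun t j h => by
      rw [← Ico_add_one_right_eq_Icc, ← Ico_add_one_right_eq_Icc,
        prod_eq_prod_Ico_succ_bot (by omega)]
  induction hs using Nat.decreasingInduction with
  | self => simpa using hlast
  | of_succ t ht ih =>
    have ih' := ih fun t' ht' => hrec t' (by simp only [mem_Ico] at ht' ⊢; omega)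
    have hmid := hrec t (by simp [ht])
    calc a t ≤ ρ t * (c * (c ^ (S - (t + 1)) * (∏ i ∈ Icc (t + 1) S, ρ i) * E +
          ∑ j ∈ Ico (t + 1) S, c ^ (j - (t + 1)) * (∏ i ∈ Icc (t + 1) j, ρ i) * γ j) + γ t) := by
          refine hmid.trans (mul_le_mul_of_nonneg_left ?_ (hρ t))
          gcongr
      _ = _ := by
          have hsum : ∑ j ∈ Ico (t + 1) S, c ^ (j - t) * (∏ i ∈ Icc t j, ρ i) * γ j =
              ρ t * c * ∑ j ∈ Ico (t + 1) S,
                c ^ (j - (t + 1)) * (∏ i ∈ Icc (t + 1) j, ρ i) * γ j := by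
            rw [mul_sum]
            refine sum_congr rfl fun j hj => ?_
            rw [mem_Ico] at hj
            rw [prod_Icc_peel t j (by omega), show j - t = j - (t + 1) + 1 by omega]
            ring
          rw [sum_eq_sum_Ico_succ_bot ht, hsum, prod_Icc_peel t S ht.le, Nat.sub_self,
            Icc_self, prod_singleton, show S - t = S - (t + 1) + 1 by omega]
          ring

lemma sum_Ico_sqrt_two_pow_mul_div {S : ℕ} (hS : 1 ≤ S) (w : ℕ → ℝ) (X : ℝ) :
    ∑ j ∈ Ico 1 S, √2 ^ (j - 1) * w j * (X / (2 * √2 ^ (S - j))) =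
      X / (2 * √(2 ^ (S + 1))) * ∑ j ∈ Icc 1 (S - 1), 2 ^ j * w j := by
  rw [← Ico_add_one_right_eq_Icc, Nat.sub_add_cancel hS, mul_sum]
  refine sum_congr rfl fun j hj => ?_
  rw [mem_Ico] at hj
  have hpow : √2 ^ (j - 1) * √(2 ^ (S + 1)) = 2 ^ j * √2 ^ (S - j) := by
    rw [Real.sqrt_pow_eq_pow_sqrt zero_le_two, ← Real.sq_sqrt zero_le_two, ← pow_mul,
      Real.sqrt_sq (Real.sqrt_nonneg 2), ← pow_add, ← pow_add]
    congr 1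
    omega
  field_simp
  linear_combination w j * X * hpow

theorem greedy_multiscale_error_bound_general
    (l u : ℝ) (hlu : l < u) (S : ℕ) (hS : 1 ≤ S)
    (fstar : ℝ → ℝ) (L q : ℝ) (hq0 : 0 ≤ q)
    (hfLip : ∀ a ∈ Set.Icc l u, ∀ b ∈ Set.Icc l u, |fstar a - fstar b| ≤ L * |a - b|)
    (K : ℕ → ℕ)
    (xstar x0 xK : ℕ → ℕ → ℝ)
    (hxstar : ∀ s, 1 ≤ s → s ≤ S → ∀ i < 2 ^ (S - s + 1) + 1,
      xstar s i = fstar (unifGrid l u (2 ^ (S - s + 1) + 1) i))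
    (hconv : ∀ s, 1 ≤ s → s ≤ S →
      vnorm (2 ^ (S - s + 1) + 1) (fun i => xK s i - xstar s i) ≤
        q ^ K s * vnorm (2 ^ (S - s + 1) + 1) (fun i => x0 s i - xstar s i))
    (hwarm : ∀ s, 1 ≤ s → s < S → ∀ j < 2 ^ (S - s + 1) + 1,
      x0 s j = midInterp (xK (s + 1)) j) :
    vnorm (2 ^ S + 1) (fun i => xK 1 i - xstar 1 i) ≤
      Real.sqrt ((2 : ℝ) ^ (S - 1)) * q ^ (∑ t ∈ Finset.Icc 1 S, K t) *
          vnorm 3 (fun i => x0 S i - xstar S i) +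
        L * (u - l) / (2 * Real.sqrt ((2 : ℝ) ^ (S + 1))) *
          ∑ s ∈ Finset.Icc 1 (S - 1), (2 : ℝ) ^ s * q ^ (∑ t ∈ Finset.Icc 1 s, K t) := by
  set e : ℕ → ℝ := fun s => vnorm (2 ^ (S - s + 1) + 1) (fun i => xK s i - xstar s i)
  have hstep : ∀ s ∈ Ico 1 S,
      e s ≤ q ^ K s * (√2 * e (s + 1) + L * (u - l) / (2 * √2 ^ (S - s))) := by
    intro s hs
    rw [mem_Ico] at hs
    have hfine : 2 ^ (S - s + 1) + 1 = 2 * 2 ^ (S - s) + 1 := by rw [pow_succ]; ring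
    have hcoarse : 2 ^ (S - (s + 1) + 1) + 1 = 2 ^ (S - s) + 1 := by
      rw [show S - (s + 1) + 1 = S - s by omega]
    have hwarm' := vnorm_warmStart_sub_le hlu hfLip (pow_ne_zero (S - s) two_ne_zero)
      (fun j hj => hwarm s hs.1 hs.2 j (hfine ▸ hj))
      (fun j hj => (hxstar s hs.1 hs.2.le j (hfine ▸ hj)).trans (by rw [hfine]))
      (fun i hi => (hxstar (s + 1) (by omega) hs.2 i (hcoarse ▸ hi)).trans (by rw [hcoarse]))
    push_cast at hwarm'
    rw [Real.sqrt_pow_eq_pow_sqrt zero_le_two, ← hfine, ← hcoarse] at hwarm'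
    exact (hconv s hs.1 hs.2.le).trans (mul_le_mul_of_nonneg_left hwarm' (pow_nonneg hq0 _))
  have hlast : e S ≤ q ^ K S * vnorm 3 (fun i => x0 S i - xstar S i) := by
    simpa [e] using hconv S hS le_rfl
  calc vnorm (2 ^ S + 1) (fun i => xK 1 i - xstar 1 i) = e 1 := by
        simp only [e, Nat.sub_add_cancel hS]
    _ ≤ _ := le_of_backward_recursion (Real.sqrt_nonneg 2) (fun t => pow_nonneg hq0 (K t)) hlast
        hstep hS
    _ = _ := by
        simp only [prod_pow_eq_pow_sum]
        rw [Real.sqrt_pow_eq_pow_sqrt zero_le_two (S - 1), sum_Ico_sqrt_two_pow_mul_div hS]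

/-- Greedy multiscale error bound.  Scale `s = 1` is finest, `s = S` coarsest, and the grid
at scale `s` has `I_s = 2^(S−s+1) + 1` points. -/
theorem greedy_multiscale_error_bound
    (l u : ℝ) (hlu : l < u) (S : ℕ) (hS : 1 ≤ S)
    (fstar : ℝ → ℝ) (L q : ℝ) (hq0 : 0 ≤ q) (hq1 : q < 1)
    (hfLip : ∀ a ∈ Set.Icc l u, ∀ b ∈ Set.Icc l u, |fstar a - fstar b| ≤ L * |a - b|)
    (K : ℕ → ℕ)
    (xstar x0 xK : ℕ → ℕ → ℝ)
    (hxstar : ∀ s, 1 ≤ s → s ≤ S → ∀ i < 2 ^ (S - s + 1) + 1,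
      xstar s i = fstar (unifGrid l u (2 ^ (S - s + 1) + 1) i))
    (hconv : ∀ s, 1 ≤ s → s ≤ S →
      vnorm (2 ^ (S - s + 1) + 1) (fun i => xK s i - xstar s i) ≤
        q ^ K s * vnorm (2 ^ (S - s + 1) + 1) (fun i => x0 s i - xstar s i))
    (hwarm : ∀ s, 1 ≤ s → s < S → ∀ j < 2 ^ (S - s + 1) + 1,
      x0 s j = midInterp (xK (s + 1)) j) :
    vnorm (2 ^ S + 1) (fun i => xK 1 i - xstar 1 i) ≤
      Real.sqrt ((2 : ℝ) ^ (S - 1)) * q ^ (∑ t ∈ Finset.Icc 1 S, K t) *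
          vnorm 3 (fun i => x0 S i - xstar S i) +
        L * (u - l) / (2 * Real.sqrt ((2 : ℝ) ^ (S + 1))) *
          ∑ s ∈ Finset.Icc 1 (S - 1), (2 : ℝ) ^ s * q ^ (∑ t ∈ Finset.Icc 1 s, K t) :=
  greedy_multiscale_error_bound_general l u hlu S hS fstar L q hq0 hfLip K xstar x0 xK hxstar hconv
    hwarm
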